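/- arXiv:1807.08139 — 4 statements merged into one kernel-verified Lean document; each statement's English description precedes it below -/
import Mathlib

section
/- Let W₁, ..., W_k be finitely many closed half-spaces in ℝⁿ with nonempty intersection W = ⋂ᵢ Wᵢ. Then there exists a constant c > 0 such that for every x ∈ ℝⁿ, d(x, W) ≤ c · maxᵢ d(x, Wᵢ). -/
/-!
Let `p` be the nearest point of the polyhedron `P = {z | ∀ i, ⟪a i, z⟫ ≤ b i}` to `x`. Since
`p + ε y ∈ P` for small `ε > 0` whenever `⟪a i, y⟫ ≤ 0` for the constraints active at `p`, the
vector `x - p` lies in the bipolar cone of the active normals. By compactness of the unit sphere,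
each nonzero `v` in the bipolar cone of a finite family satisfies
`m ‖v‖ ≤ ⟪a i, v⟫ / ‖a i‖` for some `i` and a constant `m > 0` depending only on the family.
For an active `i` the right-hand side at `v = x - p` is `(⟪a i, x⟫ - b i) / ‖a i‖`, a lower
bound for the distance from `x` to the `i`-th half-space, and there are only finitely many
possible active sets.
-/

open Metric Set Filter Topology
open scoped RealInnerProductSpace

variable {E : Type*} [NormedAddCommGroup E] [InnerProductSpace ℝ E] {ι : Type*}

/-- By Farkas' lemma this is the cone generated by the `a i`; working with this dual description
avoids Farkas' lemma altogether. -/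
def bipolarCone (a : ι → E) : Set E :=
  {u | ∀ y, (∀ i, ⟪a i, y⟫ ≤ 0) → ⟪u, y⟫ ≤ 0}

def polyhedron (a : ι → E) (b : ι → ℝ) : Set E :=
  {z | ∀ i, ⟪a i, z⟫ ≤ b i}

section BipolarCone

variable {a : ι → E}

lemma isClosed_bipolarCone (a : ι → E) : IsClosed (bipolarCone a) := by
  simp only [bipolarCone, ofPred_forall]
  exact isClosed_iInter fun y => isClosed_iInter fun _ =>
    isClosed_le (continuous_id.inner continuous_const) continuous_const

lemma smul_mem_bipolarCone {u : E} (hu : u ∈ bipolarCone a) {t : ℝ} (ht : 0 ≤ t) :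
    t • u ∈ bipolarCone a := fun y hy => by
  rw [real_inner_smul_left]
  exact mul_nonpos_of_nonneg_of_nonpos ht (hu y hy)

lemma exists_inner_pos_of_mem_bipolarCone {u : E} (hu : u ∈ bipolarCone a) (hu0 : u ≠ 0) :
    ∃ i, 0 < ⟪a i, u⟫ := by
  by_contra! h
  exact hu0 (inner_self_eq_zero.1 (le_antisymm (hu u h) real_inner_self_nonneg))

lemma exists_pos_mul_norm_le_inner_div_norm [ProperSpace E] [Finite ι] (a : ι → E) :
    ∃ m > 0, ∀ v ∈ bipolarCone a, v ≠ 0 → ∃ i, m * ‖v‖ ≤ ⟪a i, v⟫ / ‖a i‖ := by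
  cases nonempty_fintype ι
  rcases isEmpty_or_nonempty ι with _ | _
  · exact ⟨1, one_pos, fun v hv hv0 =>
      isEmptyElim (exists_inner_pos_of_mem_bipolarCone hv hv0).choose⟩
  set φ : E → ℝ := fun u => Finset.univ.sup' Finset.univ_nonempty fun i => ⟪a i, u⟫ / ‖a i‖
  have hφ : Continuous φ := Continuous.finset_sup'_apply _ fun i _ =>
    (continuous_const.inner continuous_id).div_const _
  have hK : IsCompact (bipolarCone a ∩ sphere 0 1) :=
    (isCompact_sphere 0 1).inter_left (isClosed_bipolarCone a)
  have hφ_pos : ∀ u ∈ bipolarCone a ∩ sphere 0 1, 0 < φ u := by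
    rintro u ⟨hu, hu1⟩
    obtain ⟨i, hi⟩ := exists_inner_pos_of_mem_bipolarCone hu (ne_zero_of_mem_unit_sphere ⟨u, hu1⟩)
    have ha : a i ≠ 0 := by rintro h; simp [h] at hi
    exact (div_pos hi (norm_pos_iff.2 ha)).trans_le
      (Finset.le_sup' (fun i => ⟪a i, u⟫ / ‖a i‖) (Finset.mem_univ i))
  obtain ⟨m, hm, hmφ⟩ := hK.exists_forall_le' hφ.continuousOn hφ_pos
  refine ⟨m, hm, fun v hv hv0 => ?_⟩
  have hv_norm : 0 < ‖v‖ := norm_pos_iff.2 hv0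
  have hu : ‖v‖⁻¹ • v ∈ bipolarCone a ∩ sphere 0 1 :=
    ⟨smul_mem_bipolarCone hv (inv_nonneg.2 hv_norm.le), by simp [norm_smul, hv_norm.ne']⟩
  obtain ⟨i, -, hi⟩ := Finset.exists_mem_eq_sup' Finset.univ_nonempty
    fun i => ⟪a i, ‖v‖⁻¹ • v⟫ / ‖a i‖
  refine ⟨i, ?_⟩
  have := (hmφ _ hu).trans_eq hi
  rwa [real_inner_smul_right, mul_div_assoc, le_inv_mul_iff₀ hv_norm, mul_comm] at this

end BipolarCone

section Polyhedron

variable {a : ι → E} {b : ι → ℝ}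

lemma convex_polyhedron (a : ι → E) (b : ι → ℝ) : Convex ℝ (polyhedron a b) := by
  simp only [polyhedron, ofPred_forall]
  exact convex_iInter fun i => convex_halfSpace_le
    ⟨fun _ _ => inner_add_right _ _ _, fun _ _ => real_inner_smul_right _ _ _⟩ (b i)

lemma isClosed_polyhedron (a : ι → E) (b : ι → ℝ) : IsClosed (polyhedron a b) := by
  simp only [polyhedron, ofPred_forall]
  exact isClosed_iInter fun i => isClosed_le (continuous_const.inner continuous_id) continuous_const

lemma exists_pos_add_smul_mem_polyhedron [Finite ι] {p y : E} (hp : p ∈ polyhedron a b)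
    (hy : ∀ i, ⟪a i, p⟫ = b i → ⟪a i, y⟫ ≤ 0) : ∃ ε > (0 : ℝ), p + ε • y ∈ polyhedron a b := by
  suffices ∀ i, ∀ᶠ ε in 𝓝[>] (0 : ℝ), ⟪a i, p + ε • y⟫ ≤ b i from
    ((eventually_all.2 this).and self_mem_nhdsWithin).exists.imp fun ε h => ⟨h.2, h.1⟩
  intro i
  rcases (hp i).eq_or_lt with hi | hi
  · filter_upwards [self_mem_nhdsWithin] with ε (hε : 0 < ε)
    rw [inner_add_right, real_inner_smul_right, hi]
    linarith [mul_nonpos_of_nonneg_of_nonpos hε.le (hy i hi)]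
  · have : Tendsto (fun ε : ℝ => ⟪a i, p + ε • y⟫) (𝓝 0) (𝓝 ⟪a i, p⟫) :=
      (continuous_const.inner (continuous_const.add (continuous_id.smul continuous_const))).tendsto'
        0 _ (by simp)
    exact nhdsWithin_le_nhds (this.eventually (eventually_le_nhds hi))

lemma mem_bipolarCone_of_forall_inner_sub_nonpos [Finite ι] {p v : E}
    (hp : p ∈ polyhedron a b) (hv : ∀ w ∈ polyhedron a b, ⟪v, w - p⟫ ≤ 0) :
    v ∈ bipolarCone (fun i : {i // ⟪a i, p⟫ = b i} => a i) := by
  intro y hy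
  obtain ⟨ε, hε, hmem⟩ := exists_pos_add_smul_mem_polyhedron hp fun i hi => hy ⟨i, hi⟩
  have := hv _ hmem
  rw [add_sub_cancel_left, real_inner_smul_right] at this
  exact nonpos_of_mul_nonpos_right this hε

lemma div_norm_le_infDist_halfSpace {a : E} {b : ℝ} (hne : ∃ y, ⟪a, y⟫ ≤ b) (x : E) :
    (⟪a, x⟫ - b) / ‖a‖ ≤ infDist x {y | ⟪a, y⟫ ≤ b} := by
  refine (le_infDist hne).2 fun y (hy : ⟪a, y⟫ ≤ b) => div_le_of_le_mul₀ (norm_nonneg _)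
    dist_nonneg ?_
  calc ⟪a, x⟫ - b ≤ ⟪a, x - y⟫ := by rw [inner_sub_right]; linarith
    _ ≤ ‖a‖ * ‖x - y‖ := real_inner_le_norm _ _
    _ = dist x y * ‖a‖ := by rw [dist_eq_norm, mul_comm]

lemma exists_projection_polyhedron [CompleteSpace E] (hne : (polyhedron a b).Nonempty) (x : E) :
    ∃ p ∈ polyhedron a b, infDist x (polyhedron a b) = ‖x - p‖ ∧
      ∀ w ∈ polyhedron a b, ⟪x - p, w - p⟫ ≤ 0 := by
  have hconv := convex_polyhedron a b
  obtain ⟨p, hp, hmin⟩ := exists_norm_eq_iInf_of_complete_convex hne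
    (isClosed_polyhedron a b).isComplete hconv x
  refine ⟨p, hp, ?_, (norm_eq_iInf_iff_real_inner_le_zero hconv hp).1 hmin⟩
  rw [infDist_eq_iInf, hmin]
  simp only [dist_eq_norm]

theorem exists_pos_infDist_polyhedron_le [ProperSpace E] [Finite ι]
    (hne : (polyhedron a b).Nonempty) :
    ∃ c > 0, ∀ x, infDist x (polyhedron a b) ≤ c * ⨆ i, infDist x {z | ⟪a i, z⟫ ≤ b i} := by
  choose m hm_pos hm using fun s : Set ι => exists_pos_mul_norm_le_inner_div_norm fun i : s => a i
  set c := ⨆ s, (m s)⁻¹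
  have hc : ∀ s, (m s)⁻¹ ≤ c := le_ciSup (Finite.bddAbove_range _)
  have hc_pos : 0 < c := (inv_pos.2 (hm_pos ∅)).trans_le (hc ∅)
  refine ⟨c, hc_pos, fun x => ?_⟩
  obtain ⟨p, hp, hdist, hnormal⟩ := exists_projection_polyhedron hne x
  rcases eq_or_ne (x - p) 0 with hxp | hxp
  · rw [hdist, hxp, norm_zero]
    exact mul_nonneg hc_pos.le (Real.iSup_nonneg fun _ => infDist_nonneg)
  obtain ⟨⟨i, hi⟩, hmi⟩ := hm {i | ⟪a i, p⟫ = b i} (x - p)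
    (mem_bipolarCone_of_forall_inner_sub_nonpos hp hnormal) hxp
  have hxi : ⟪a i, x - p⟫ = ⟪a i, x⟫ - b i := by rw [inner_sub_right, show ⟪a i, p⟫ = b i from hi]
  calc infDist x (polyhedron a b) = ‖x - p‖ := hdist
    _ ≤ (m _)⁻¹ * ((⟪a i, x⟫ - b i) / ‖a i‖) := by
        rwa [le_inv_mul_iff₀ (hm_pos _), ← hxi]
    _ ≤ (m _)⁻¹ * infDist x {z | ⟪a i, z⟫ ≤ b i} := mul_le_mul_of_nonneg_left
        (div_norm_le_infDist_halfSpace ⟨p, hp i⟩ x) (inv_nonneg.2 (hm_pos _).le)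
    _ ≤ c * ⨆ i, infDist x {z | ⟪a i, z⟫ ≤ b i} := mul_le_mul (hc _)
        (le_ciSup (f := fun i => infDist x {z | ⟪a i, z⟫ ≤ b i}) (Finite.bddAbove_range _) i)
        infDist_nonneg hc_pos.le

end Polyhedron

theorem stmt_5_general (n : ℕ) (ι : Type) [Fintype ι]
    (a : ι → EuclideanSpace ℝ (Fin n)) (b : ι → ℝ)
    (W : ι → Set (EuclideanSpace ℝ (Fin n)))
    (hW : ∀ i, W i = {x | inner ℝ (a i) x ≤ b i})
    (hne : (⋂ i, W i).Nonempty) :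
    ∃ c > (0 : ℝ), ∀ x : EuclideanSpace ℝ (Fin n),
      Metric.infDist x (⋂ i, W i) ≤ c * ⨆ i, Metric.infDist x (W i) := by
  have hP : ⋂ i, W i = polyhedron a b := by
    ext z
    simp [polyhedron, hW]
  obtain ⟨c, hc, h⟩ := exists_pos_infDist_polyhedron_le (hP ▸ hne)
  exact ⟨c, hc, fun x => by rw [hP]; simpa only [hW] using h x⟩

/-- Hoffman-type bound: for finitely many closed half-spaces with
nonempty intersection W, there is c > 0 with d(x, W) ≤ c · maxᵢ d(x, Wᵢ). -/
theorem stmt_5 (n : ℕ) (ι : Type) [Fintype ι] [Nonempty ι]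
    (a : ι → EuclideanSpace ℝ (Fin n)) (b : ι → ℝ) (ha : ∀ i, a i ≠ 0)
    (W : ι → Set (EuclideanSpace ℝ (Fin n)))
    (hW : ∀ i, W i = {x | inner ℝ (a i) x ≤ b i})
    (hne : (⋂ i, W i).Nonempty) :
    ∃ c > (0 : ℝ), ∀ x : EuclideanSpace ℝ (Fin n),
      Metric.infDist x (⋂ i, W i) ≤ c * ⨆ i, Metric.infDist x (W i) :=
  stmt_5_general n ι a b W hW hne
end

section
/- Let M ⊂ ℝⁿ be finite, Φ(x) = max_{μ∈M}(-μᵀx + b_μ), with regions R_μ and active sets M(x) as usual. Define a point p to be critical if span{ μ - μ' : μ, μ' ∈ M(p) } = ℝⁿ. Then for any ν ∈ M and p ∈ R_ν, p is a critical point if and only if p is an extreme point of the polyhedron R_ν. In particular, the set of critical points is finite. -/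
/-!
If `ν` is active at `p`, every active piece `κ` gives an affine function
`⟪κ - ν, ·⟫ + b_ν - b_κ` that is nonnegative on `R_ν` and vanishes at `p`. If `p` lies inside a
segment of `R_ν`, these functions vanish on the whole segment, so every active piece stays active
at its endpoints; since a critical point is determined by the linear system
`⟪κ - κ', p⟫ = b_κ - b_κ'` (`κ, κ' ∈ M(p)`), the endpoints equal `p`. Conversely, a direction `u`
orthogonal to all differences of active pieces keeps the active pieces tied along `p + t u`, while
for small `|t|` no inactive piece becomes active, so `p ± ε u ∈ R_ν`. Finiteness holds because a
critical point is determined by its active set, a subset of `M`.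
-/

open Filter Topology
open scoped Pointwise InnerProductSpace

section InnerProductSpace

variable {E : Type*} [NormedAddCommGroup E] [InnerProductSpace ℝ E]

theorem eq_of_forall_inner_eq_of_span_eq_top {S : Set E} (hS : Submodule.span ℝ S = ⊤)
    {x y : E} (h : ∀ d ∈ S, ⟪d, x⟫_ℝ = ⟪d, y⟫_ℝ) : x = y := by
  have hle : Submodule.span ℝ S ≤ (ℝ ∙ (x - y))ᗮ := by
    rw [Submodule.span_le]
    intro d hd
    rw [SetLike.mem_coe, Submodule.mem_orthogonal_singleton_iff_inner_left, inner_sub_right,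
      h d hd, sub_self]
  have hxy : x - y ∈ (ℝ ∙ (x - y))ᗮ := hle (hS ▸ Submodule.mem_top)
  rwa [Submodule.mem_orthogonal_singleton_iff_inner_left, inner_self_eq_zero, sub_eq_zero] at hxy

theorem exists_ne_zero_forall_inner_eq_zero_of_span_ne_top {S : Set E} (hS : S.Finite)
    (h : Submodule.span ℝ S ≠ ⊤) : ∃ u ≠ 0, ∀ d ∈ S, ⟪d, u⟫_ℝ = 0 := by
  have := FiniteDimensional.span_of_finite ℝ hS
  obtain ⟨u, hu, hu0⟩ := Submodule.exists_mem_ne_zero_of_ne_bot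
    (mt Submodule.orthogonal_eq_bot_iff.1 h)
  exact ⟨u, hu0, fun d hd => (Submodule.mem_orthogonal _ u).1 hu d (Submodule.subset_span hd)⟩

-- `affinePiece b κ`, `activeSet M b p` and `region M b ν` are the paper's `x ↦ -κᵀx + b_κ`,
-- `M(p)` and `R_ν`.
def affinePiece (b : E → ℝ) (κ x : E) : ℝ := -⟪κ, x⟫_ℝ + b κ

def activeSet (M : Finset E) (b : E → ℝ) (p : E) : Set E :=
  {κ | κ ∈ M ∧ ∀ ν ∈ M, affinePiece b ν p ≤ affinePiece b κ p}

def region (M : Finset E) (b : E → ℝ) (ν : E) : Set E :=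
  {x | ∀ κ ∈ M, affinePiece b κ x ≤ affinePiece b ν x}

def IsCriticalPoint (M : Finset E) (b : E → ℝ) (p : E) : Prop :=
  Submodule.span ℝ (activeSet M b p - activeSet M b p) = ⊤

variable {M : Finset E} {b : E → ℝ}

theorem continuous_affinePiece (b : E → ℝ) (κ : E) : Continuous (affinePiece b κ) := by
  unfold affinePiece
  fun_prop

theorem affinePiece_combo {a c : ℝ} (hac : a + c = 1) (κ x y : E) :
    affinePiece b κ (a • x + c • y) = a * affinePiece b κ x + c * affinePiece b κ y := by
  simp only [affinePiece, inner_add_right, real_inner_smul_right]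
  linear_combination (-b κ) * hac

theorem affinePiece_eq_of_mem_activeSet {p κ κ' : E} (hκ : κ ∈ activeSet M b p)
    (hκ' : κ' ∈ activeSet M b p) : affinePiece b κ p = affinePiece b κ' p :=
  le_antisymm (hκ'.2 κ hκ.1) (hκ.2 κ' hκ'.1)

theorem inner_sub_eq_of_mem_activeSet {p κ κ' : E} (hκ : κ ∈ activeSet M b p)
    (hκ' : κ' ∈ activeSet M b p) : ⟪κ - κ', p⟫_ℝ = b κ - b κ' := by
  have h := affinePiece_eq_of_mem_activeSet hκ hκ'
  rw [affinePiece, affinePiece] at h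
  rw [inner_sub_left]
  linarith

theorem affinePiece_add_smul_eq_of_mem_activeSet {p u κ ν : E} (hκ : κ ∈ activeSet M b p)
    (hν : ν ∈ activeSet M b p) (hu : ⟪κ - ν, u⟫_ℝ = 0) (t : ℝ) :
    affinePiece b κ (p + t • u) = affinePiece b ν (p + t • u) := by
  have h := affinePiece_eq_of_mem_activeSet hκ hν
  simp only [affinePiece, inner_add_right, real_inner_smul_right] at h ⊢
  rw [inner_sub_left] at hu
  linear_combination h - t * hu

theorem activeSet_nonempty (hM : M.Nonempty) (p : E) : (activeSet M b p).Nonempty := by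
  obtain ⟨κ, hκ, hmax⟩ := M.exists_max_image (affinePiece b · p) hM
  exact ⟨κ, hκ, hmax⟩

theorem activeSet_finite (M : Finset E) (b : E → ℝ) (p : E) : (activeSet M b p).Finite :=
  M.finite_toSet.subset fun _ hκ => hκ.1

theorem eventually_activeSet_subset (M : Finset E) (b : E → ℝ) (p : E) :
    ∀ᶠ z in 𝓝 p, activeSet M b z ⊆ activeSet M b p := by
  have h : ∀ κ ∈ M, ∀ᶠ z in 𝓝 p, κ ∈ activeSet M b z → κ ∈ activeSet M b p := by
    intro κ hκ
    by_cases hκp : κ ∈ activeSet M b p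
    · exact Eventually.of_forall fun _ _ => hκp
    · obtain ⟨μ, hμ, hlt⟩ : ∃ μ ∈ M, affinePiece b κ p < affinePiece b μ p := by
        simpa [activeSet, hκ] using hκp
      filter_upwards [(continuous_affinePiece b κ).continuousAt.eventually_lt
        (continuous_affinePiece b μ).continuousAt hlt] with z hz hκz
      exact absurd (hκz.2 μ hμ) hz.not_ge
  filter_upwards [(eventually_all_finset M).2 h] with z hz κ hκz using hz κ hκz.1 hκz

theorem activeSet_subset_of_mem_openSegment {ν x y p : E} (hx : x ∈ region M b ν)
    (hy : y ∈ region M b ν) (hνp : ν ∈ activeSet M b p) (hp : p ∈ openSegment ℝ x y) :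
    activeSet M b p ⊆ activeSet M b x := by
  obtain ⟨a, c, ha, hc, hac, rfl⟩ := hp
  intro κ hκ
  refine ⟨hκ.1, fun μ hμ => (hx μ hμ).trans ?_⟩
  have h := affinePiece_eq_of_mem_activeSet hκ hνp
  rw [affinePiece_combo hac, affinePiece_combo hac] at h
  nlinarith [mul_le_mul_of_nonneg_left (hy κ hκ.1) hc.le]

theorem IsCriticalPoint.eq_of_activeSet_subset {p q : E} (hp : IsCriticalPoint M b p)
    (hpq : activeSet M b p ⊆ activeSet M b q) : p = q := by
  refine eq_of_forall_inner_eq_of_span_eq_top hp ?_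
  rintro _ ⟨κ, hκ, κ', hκ', rfl⟩
  rw [inner_sub_eq_of_mem_activeSet hκ hκ', inner_sub_eq_of_mem_activeSet (hpq hκ) (hpq hκ')]

theorem IsCriticalPoint.mem_extremePoints_region {ν p : E} (hp : IsCriticalPoint M b p)
    (hνp : ν ∈ activeSet M b p) : p ∈ (region M b ν).extremePoints ℝ :=
  mem_extremePoints_iff_left.2 ⟨hνp.2, fun _ hx _ hy hpxy =>
    (hp.eq_of_activeSet_subset (activeSet_subset_of_mem_openSegment hx hy hνp hpxy)).symm⟩

theorem add_smul_mem_region {ν p u : E} (hν : ν ∈ activeSet M b p)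
    (hu : ∀ d ∈ activeSet M b p - activeSet M b p, ⟪d, u⟫_ℝ = 0) {t : ℝ}
    (ht : activeSet M b (p + t • u) ⊆ activeSet M b p) : p + t • u ∈ region M b ν := by
  obtain ⟨κ, hκ⟩ := activeSet_nonempty ⟨ν, hν.1⟩ (p + t • u)
  intro μ hμ
  rw [← affinePiece_add_smul_eq_of_mem_activeSet (ht hκ) hν (hu _ (Set.sub_mem_sub (ht hκ) hν))]
  exact hκ.2 μ hμ

theorem isCriticalPoint_of_mem_extremePoints_region {ν p : E} (hν : ν ∈ activeSet M b p)
    (hp : p ∈ (region M b ν).extremePoints ℝ) : IsCriticalPoint M b p := by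
  by_contra hcrit
  obtain ⟨u, hu0, hu⟩ := exists_ne_zero_forall_inner_eq_zero_of_span_ne_top
    ((activeSet_finite M b p).sub (activeSet_finite M b p)) hcrit
  have hline : Tendsto (fun t : ℝ => p + t • u) (𝓝 0) (𝓝 p) := by
    have h : Continuous fun t : ℝ => p + t • u := by fun_prop
    simpa using h.tendsto 0
  have hpos : ∀ᶠ t in 𝓝[>] (0 : ℝ), activeSet M b (p + t • u) ⊆ activeSet M b p ∧
      activeSet M b (p + (-t) • u) ⊆ activeSet M b p := by
    refine nhdsWithin_le_nhds ((hline.eventually (eventually_activeSet_subset M b p)).and ?_)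
    exact (hline.comp (by simpa using tendsto_neg (0 : ℝ))).eventually (eventually_activeSet_subset M b p)
  obtain ⟨ε, ⟨hε₁, hε₂⟩, hε⟩ := (hpos.and self_mem_nhdsWithin).exists
  have hpε : p + ε • u = p := mem_extremePoints_iff_left.1 hp |>.2 _
    (add_smul_mem_region hν hu hε₁) _ (add_smul_mem_region hν hu hε₂)
    ⟨1 / 2, 1 / 2, by norm_num, by norm_num, by norm_num, by module⟩
  rw [add_eq_left, smul_eq_zero] at hpε
  exact hpε.elim (ne_of_gt hε) hu0

theorem finite_setOf_isCriticalPoint (M : Finset E) (b : E → ℝ) :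
    {p | IsCriticalPoint M b p}.Finite := by
  refine Set.Finite.of_finite_image ?_ fun p hp q _ hpq =>
    IsCriticalPoint.eq_of_activeSet_subset hp hpq.le
  exact M.finite_toSet.finite_subsets.subset (Set.image_subset_iff.2 fun _ _ _ hκ => hκ.1)

end InnerProductSpace

/-- For p in a region R_ν, p is a critical point iff p is an
extreme point of R_ν; and the set of critical points is finite. -/
theorem stmt_8 (n : ℕ) (M : Finset (EuclideanSpace ℝ (Fin n)))
    (b : EuclideanSpace ℝ (Fin n) → ℝ)
    (Act : EuclideanSpace ℝ (Fin n) → Set (EuclideanSpace ℝ (Fin n)))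
    (hAct : ∀ p, Act p = {κ : EuclideanSpace ℝ (Fin n) | κ ∈ M ∧
        ∀ ν ∈ M, -(inner ℝ ν p) + b ν ≤ -(inner ℝ κ p) + b κ})
    (Critical : EuclideanSpace ℝ (Fin n) → Prop)
    (hCrit : ∀ p, Critical p ↔
        Submodule.span ℝ {d : EuclideanSpace ℝ (Fin n) |
          ∃ κ ∈ Act p, ∃ κ' ∈ Act p, d = κ - κ'} = ⊤)
    (R : EuclideanSpace ℝ (Fin n) → Set (EuclideanSpace ℝ (Fin n)))
    (hR : ∀ ν, R ν = {x : EuclideanSpace ℝ (Fin n) |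
        ∀ κ ∈ M, -(inner ℝ κ x) + b κ ≤ -(inner ℝ ν x) + b ν}) :
    (∀ ν ∈ M, ∀ p ∈ R ν, (Critical p ↔ p ∈ Set.extremePoints ℝ (R ν))) ∧
    {p : EuclideanSpace ℝ (Fin n) | Critical p}.Finite := by
  obtain rfl : Act = activeSet M b := funext hAct
  obtain rfl : R = region M b := funext hR
  obtain rfl : Critical = IsCriticalPoint M b := by
    funext p
    rw [hCrit, IsCriticalPoint, ← Set.image2_sub]
    simp only [Set.image2, eq_comm]
  refine ⟨fun ν hν p hp => ?_, finite_setOf_isCriticalPoint M b⟩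
  have hνp : ν ∈ activeSet M b p := ⟨hν, hp⟩
  exact ⟨fun hcrit => hcrit.mem_extremePoints_region hνp,
    isCriticalPoint_of_mem_extremePoints_region hνp⟩
end

section
/- Let Φ : ℝⁿ → ℝ be convex, let ξ ∈ ℝⁿ, and suppose that -ξ ∈ ∂Φ(p + tξ) for all t ≥ 0. Then for every x ∈ ℝⁿ and every y ∈ -∂Φ(x), one has ⟨ξ, y⟩ ≥ ‖ξ‖². -/
/-!
Subgradients of any function are monotone: if `g ∈ ∂Φ(x)` and `h ∈ ∂Φ(u)` then
`⟪g - h, x - u⟫ ≥ 0`. Applied to `-y ∈ ∂Φ(x)` and `-ξ ∈ ∂Φ(p + tξ)` this gives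
`⟪ξ - y, x - p⟫ + t ⟪y - ξ, ξ⟫ ≥ 0` for every `t ≥ 0`, so the slope `⟪y - ξ, ξ⟫` is nonnegative,
which is `‖ξ‖² ≤ ⟪ξ, y⟫`.
-/

open RealInnerProductSpace

section Subgradient

variable {E : Type*} [NormedAddCommGroup E] [InnerProductSpace ℝ E]

def HasSubgradientAt (Φ : E → ℝ) (g x : E) : Prop :=
  ∀ z, Φ x + ⟪g, z - x⟫ ≤ Φ z

theorem HasSubgradientAt.inner_sub_nonneg {Φ : E → ℝ} {g h x u : E}
    (hg : HasSubgradientAt Φ g x) (hh : HasSubgradientAt Φ h u) :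
    0 ≤ ⟪g - h, x - u⟫ := by
  have hgu := hg u
  have hhx := hh x
  have hsum : ⟪g - h, x - u⟫ = -⟪g, u - x⟫ - ⟪h, x - u⟫ := by
    rw [inner_sub_left, ← neg_sub x u, inner_neg_right]
    ring
  linarith

end Subgradient

theorem nonneg_of_forall_nonneg_add_mul {𝕜 : Type*} [Field 𝕜] [LinearOrder 𝕜]
    [IsStrictOrderedRing 𝕜] {a c : 𝕜} (h : ∀ t, 0 ≤ t → 0 ≤ a + t * c) : 0 ≤ c := by
  by_contra! hc
  have hpos : 0 < -c := neg_pos.mpr hc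
  have ht : (|a| + 1) / -c * c = -(|a| + 1) := by
    rw [div_mul_eq_mul_div, div_eq_iff hpos.ne']
    ring
  have := h ((|a| + 1) / -c) (by positivity)
  linarith [le_abs_self a]

theorem stmt_14_general (n : ℕ) (Φ : EuclideanSpace ℝ (Fin n) → ℝ)
    (p ξ : EuclideanSpace ℝ (Fin n))
    (hline : ∀ t : ℝ, 0 ≤ t →
      ∀ y, Φ (p + t • ξ) + inner ℝ (-ξ) (y - (p + t • ξ)) ≤ Φ y) :
    ∀ x y : EuclideanSpace ℝ (Fin n),
      (∀ z, Φ x + inner ℝ (-y) (z - x) ≤ Φ z) → ‖ξ‖ ^ 2 ≤ inner ℝ ξ y := by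
  intro x y hy
  have hslope : 0 ≤ ⟪y - ξ, ξ⟫ := by
    refine nonneg_of_forall_nonneg_add_mul (a := ⟪ξ - y, x - p⟫) fun t ht => ?_
    have hmono := HasSubgradientAt.inner_sub_nonneg (Φ := Φ) hy (hline t ht)
    have hexpand : ⟪-y - -ξ, x - (p + t • ξ)⟫ = ⟪ξ - y, x - p⟫ + t * ⟪y - ξ, ξ⟫ := by
      rw [neg_sub_neg, sub_add_eq_sub_sub, inner_sub_right _ (x - p), real_inner_smul_right,
        ← neg_sub y ξ, inner_neg_left, inner_neg_left]
      ring
    linarith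
  rwa [inner_sub_left, real_inner_self_eq_norm_sq, real_inner_comm, sub_nonneg] at hslope

/-- If -ξ ∈ ∂Φ(p + tξ) for all t ≥ 0, then for every x and every
y ∈ -∂Φ(x), ⟨ξ, y⟩ ≥ ‖ξ‖². -/
theorem stmt_14 (n : ℕ) (Φ : EuclideanSpace ℝ (Fin n) → ℝ)
    (hΦ : ConvexOn ℝ Set.univ Φ) (p ξ : EuclideanSpace ℝ (Fin n))
    (hline : ∀ t : ℝ, 0 ≤ t →
      ∀ y, Φ (p + t • ξ) + inner ℝ (-ξ) (y - (p + t • ξ)) ≤ Φ y) :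
    ∀ x y : EuclideanSpace ℝ (Fin n),
      (∀ z, Φ x + inner ℝ (-y) (z - x) ≤ Φ z) → ‖ξ‖ ^ 2 ≤ inner ℝ ξ y :=
  stmt_14_general n Φ p ξ hline
end

section
/- Let M ⊂ ℝⁿ be finite with associated Φ(x) = max_{μ∈M}(-μᵀx + b_μ), regions R_μ, active sets M(x), and set of critical points C (points p with span{μ-μ' : μ,μ' ∈ M(p)} = ℝⁿ). Let p ∈ C, and let B be the closed ball of radius γ₀ around p, where 2γ₀ = min{ d(p', R_μ) : p' ∈ C, μ ∈ M, p' ∉ R_μ } (taken to be +∞ if the set is empty). Then for every x ∈ B, M(x) ⊆ M(p), and consequently Φ(x) = Φ(p) + max_{μ∈M(p)} (-μᵀ(x - p)) for all x ∈ B. -/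
/-! If `x` lies in the ball of radius `γ₀` around the critical point `p` and some piece `ν` is
active at `x`, then `x ∈ R ν`, so
`d(p, R ν) ≤ |x - p| ≤ γ₀ < 2γ₀` unless `x = p`; hence `p ∈ R ν` as well, i.e. `M(x) ⊆ M(p)`.
A maximiser `μ` at `x` is then active at both points, so `Φ x - Φ p = -μᵀ(x - p)`, and every
other `κ ∈ M(p)` satisfies `-κᵀ(x - p) = (-κᵀx + b κ) - Φ p ≤ Φ x - Φ p`. -/

section FiniteMax

variable {ι X : Type*} {M : Finset ι} {g : ι → X → ℝ} {Φ : X → ℝ}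

lemma le_of_eq_iSup (hΦ : ∀ x, Φ x = ⨆ κ : {κ // κ ∈ M}, g κ x) {κ : ι} (hκ : κ ∈ M)
    (x : X) : g κ x ≤ Φ x := by
  rw [hΦ]
  exact le_ciSup (f := fun κ : {κ // κ ∈ M} => g κ x) (Set.finite_range _).bddAbove ⟨κ, hκ⟩

lemma exists_mem_eq_of_eq_iSup (hΦ : ∀ x, Φ x = ⨆ κ : {κ // κ ∈ M}, g κ x) (hM : M.Nonempty)
    (x : X) : ∃ κ ∈ M, Φ x = g κ x := by
  have : Nonempty {κ // κ ∈ M} := hM.to_subtype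
  obtain ⟨⟨κ, hκ⟩, hmax⟩ := exists_eq_ciSup_of_finite (f := fun κ : {κ // κ ∈ M} => g κ x)
  exact ⟨κ, hκ, (hΦ x).trans hmax.symm⟩

lemma eq_iff_forall_le_of_eq_iSup (hΦ : ∀ x, Φ x = ⨆ κ : {κ // κ ∈ M}, g κ x) {κ : ι}
    (hκ : κ ∈ M) (x : X) : Φ x = g κ x ↔ ∀ ν ∈ M, g ν x ≤ g κ x := by
  refine ⟨fun h ν hν => h ▸ le_of_eq_iSup hΦ hν x, fun h => ?_⟩
  have : Nonempty {κ // κ ∈ M} := ⟨⟨κ, hκ⟩⟩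
  refine le_antisymm ?_ (le_of_eq_iSup hΦ hκ x)
  rw [hΦ]
  exact ciSup_le fun ν => h ν ν.2

end FiniteMax

lemma ciSup_subtype_eq_of_forall_le {ι : Type*} {A : Set ι} {h : ι → ℝ} {μ : ι} (hμ : μ ∈ A)
    (hle : ∀ κ ∈ A, h κ ≤ h μ) : ⨆ κ : A, h κ = h μ :=
  have : Nonempty A := ⟨⟨μ, hμ⟩⟩
  le_antisymm (ciSup_le fun κ => hle κ κ.2)
    (le_ciSup (f := fun κ : A => h κ) ⟨h μ, by rintro _ ⟨κ, rfl⟩; exact hle κ κ.2⟩ ⟨μ, hμ⟩)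

lemma Metric.mem_of_mem_closedBall_of_two_mul_le_infDist {α : Type*} [MetricSpace α]
    {s : Set α} {p x : α} {γ : ℝ} (hx : x ∈ Metric.closedBall p γ) (hxs : x ∈ s)
    (hγ : p ∉ s → 2 * γ ≤ Metric.infDist p s) : p ∈ s := by
  by_contra hps
  have hdist : dist p x ≤ Metric.infDist p s / 2 := by
    rw [dist_comm]
    linarith [Metric.mem_closedBall.mp hx, hγ hps]
  have hinf : Metric.infDist p s ≤ dist p x := Metric.infDist_le_dist_of_mem hxs
  have hxp : x = p := (dist_eq_zero.mp (by linarith [dist_nonneg (x := p) (y := x)])).symm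
  exact hps (hxp ▸ hxs)

theorem stmt_17_general (n : ℕ) (M : Finset (EuclideanSpace ℝ (Fin n))) (hM : M.Nonempty)
    (b : EuclideanSpace ℝ (Fin n) → ℝ)
    (Φ : EuclideanSpace ℝ (Fin n) → ℝ)
    (hΦ : ∀ x, Φ x = ⨆ κ : {κ // κ ∈ M}, (-(inner ℝ (κ : EuclideanSpace ℝ (Fin n)) x) + b κ))
    (Act : EuclideanSpace ℝ (Fin n) → Set (EuclideanSpace ℝ (Fin n)))
    (hAct : ∀ x, Act x = {κ : EuclideanSpace ℝ (Fin n) | κ ∈ M ∧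
        Φ x = -(inner ℝ κ x) + b κ})
    (R : EuclideanSpace ℝ (Fin n) → Set (EuclideanSpace ℝ (Fin n)))
    (hR : ∀ μ, R μ = {x : EuclideanSpace ℝ (Fin n) |
        ∀ ν ∈ M, -(inner ℝ ν x) + b ν ≤ -(inner ℝ μ x) + b μ})
    (C : Set (EuclideanSpace ℝ (Fin n)))
    (p : EuclideanSpace ℝ (Fin n)) (hp : p ∈ C)
    (γ₀ : ℝ)
    (hγ₀ : ∀ p' ∈ C, ∀ μ ∈ M, p' ∉ R μ → 2 * γ₀ ≤ Metric.infDist p' (R μ)) :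
    ∀ x ∈ Metric.closedBall p γ₀,
      Act x ⊆ Act p ∧
      Φ x = Φ p + ⨆ κ : {κ // κ ∈ Act p},
        -(inner ℝ (κ : EuclideanSpace ℝ (Fin n)) (x - p)) := by
  intro x hx
  have mem_Act_iff : ∀ y ν, ν ∈ Act y ↔ ν ∈ M ∧ y ∈ R ν := fun y ν => by
    rw [hAct, hR, Set.mem_ofPred_eq, Set.mem_ofPred_eq]
    exact and_congr_right fun hν =>
      eq_iff_forall_le_of_eq_iSup (g := fun κ y => -(inner ℝ κ y) + b κ) hΦ hν y
  have hsub : Act x ⊆ Act p := fun ν hν => by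
    rw [mem_Act_iff] at hν ⊢
    exact ⟨hν.1, Metric.mem_of_mem_closedBall_of_two_mul_le_infDist hx hν.2 (hγ₀ p hp ν hν.1)⟩
  refine ⟨hsub, ?_⟩
  obtain ⟨μ, hμM, hΦx⟩ : ∃ μ ∈ M, Φ x = -(inner ℝ μ x) + b μ :=
    exists_mem_eq_of_eq_iSup (g := fun κ y => -(inner ℝ κ y) + b κ) hΦ hM x
  have hμp : μ ∈ Act p := hsub (by rw [hAct]; exact ⟨hμM, hΦx⟩)
  have hΦp : Φ p = -(inner ℝ μ p) + b μ := by rw [hAct] at hμp; exact hμp.2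
  have increment : ∀ κ : EuclideanSpace ℝ (Fin n), -(inner ℝ κ (x - p)) =
      (-(inner ℝ κ x) + b κ) - (-(inner ℝ κ p) + b κ) := fun κ => by
    rw [inner_sub_right]; ring
  rw [ciSup_subtype_eq_of_forall_le (h := fun κ => -(inner ℝ κ (x - p))) hμp, increment,
    ← hΦx, ← hΦp]
  · ring
  · intro κ hκ
    rw [hAct] at hκ
    simp only [increment, ← hκ.2, ← hΦx, ← hΦp]
    linarith [le_of_eq_iSup (g := fun κ y => -(inner ℝ κ y) + b κ) hΦ hκ.1 x]

/-- Within the conic-neighbourhood-constant radius γ₀ around a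
critical point p, the active sets shrink to M(p) and Φ is conic:
Φ(x) = Φ(p) + max_{μ∈M(p)} (-μᵀ(x-p)). -/
theorem stmt_17 (n : ℕ) (M : Finset (EuclideanSpace ℝ (Fin n))) (hM : M.Nonempty)
    (b : EuclideanSpace ℝ (Fin n) → ℝ)
    (Φ : EuclideanSpace ℝ (Fin n) → ℝ)
    (hΦ : ∀ x, Φ x = ⨆ κ : {κ // κ ∈ M}, (-(inner ℝ (κ : EuclideanSpace ℝ (Fin n)) x) + b κ))
    (Act : EuclideanSpace ℝ (Fin n) → Set (EuclideanSpace ℝ (Fin n)))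
    (hAct : ∀ x, Act x = {κ : EuclideanSpace ℝ (Fin n) | κ ∈ M ∧
        Φ x = -(inner ℝ κ x) + b κ})
    (R : EuclideanSpace ℝ (Fin n) → Set (EuclideanSpace ℝ (Fin n)))
    (hR : ∀ μ, R μ = {x : EuclideanSpace ℝ (Fin n) |
        ∀ ν ∈ M, -(inner ℝ ν x) + b ν ≤ -(inner ℝ μ x) + b μ})
    (C : Set (EuclideanSpace ℝ (Fin n)))
    (hC : C = {q : EuclideanSpace ℝ (Fin n) |
        Submodule.span ℝ {d : EuclideanSpace ℝ (Fin n) |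
          ∃ κ ∈ Act q, ∃ κ' ∈ Act q, d = κ - κ'} = ⊤})
    (p : EuclideanSpace ℝ (Fin n)) (hp : p ∈ C)
    (γ₀ : ℝ)
    (hγ₀ : ∀ p' ∈ C, ∀ μ ∈ M, p' ∉ R μ → 2 * γ₀ ≤ Metric.infDist p' (R μ)) :
    ∀ x ∈ Metric.closedBall p γ₀,
      Act x ⊆ Act p ∧
      Φ x = Φ p + ⨆ κ : {κ // κ ∈ Act p},
        -(inner ℝ (κ : EuclideanSpace ℝ (Fin n)) (x - p)) :=
  stmt_17_general n M hM b Φ hΦ Act hAct R hR C p hp γ₀ hγ₀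
end
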